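/- arXiv:2210.16763 — 11 statements merged into one kernel-verified Lean document; each statement's English description precedes it below -/
import Mathlib

section
/- Let G be a finite group, ψ an automorphism of G, and Q = Q(G,ψ) with s_x(y) = x·ψ(x⁻¹y). Let P = {x ∈ G : ∃ a_1,…,a_r ∈ G, x = s_{a_1} ∘ ⋯ ∘ s_{a_r}(e)} be the orbit of the identity e under the inner automorphism group of Q. Then for every x ∈ P there exist a_1,…,a_r ∈ G such that the left translation L_x : y ↦ xy equals s_{a_1} ∘ ⋯ ∘ s_{a_r} as a map on G. -/
/-- The orbit `P` of the identity under the inner automorphism group of the generalized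
Alexander quandle `Q(G, ψ)`. An element is in `P` iff it is obtained from the identity by
applying finitely many point symmetries `s_a(y) = a * ψ(a⁻¹ y)`. -/
def orbitOfIdentity {G : Type*} [Group G] (ψ : G ≃* G) : Set G :=
  {x | ∃ l : List G, x = l.foldr (fun a y => a * ψ (a⁻¹ * y)) 1}

private lemma foldr_eq_mul_iterate {G : Type*} [Group G] (ψ : G ≃* G) (l : List G) (y : G) :
    l.foldr (fun a z => a * ψ (a⁻¹ * z)) y
      = l.foldr (fun a z => a * ψ (a⁻¹ * z)) 1 * (⇑ψ)^[l.length] y := by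
  induction l with
  | nil => simp
  | cons a l ih =>
    simp only [List.foldr_cons, List.length_cons, ih]
    rw [Function.iterate_succ_apply']
    simp [map_mul, mul_assoc]

private lemma foldr_replicate_one {G : Type*} [Group G] (ψ : G ≃* G) (k : ℕ) (y : G) :
    (List.replicate k (1 : G)).foldr (fun a z => a * ψ (a⁻¹ * z)) y = (⇑ψ)^[k] y := by
  induction k with
  | zero => simp
  | succ k ih =>
    rw [List.replicate_succ, List.foldr_cons, ih, Function.iterate_succ_apply']
    simp

/-- For `x` in the orbit of the identity, the left translation `L_x : y ↦ x * y` is a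
composition of point symmetries `s_{a₁} ∘ ⋯ ∘ s_{a_r}`. -/
theorem left_translation_eq_comp_of_symmetries {G : Type*} [Group G] [Finite G]
    (ψ : G ≃* G) (x : G) (hx : x ∈ orbitOfIdentity ψ) :
    ∃ l : List G, ∀ y : G, x * y = l.foldr (fun a z => a * ψ (a⁻¹ * z)) y := by
  obtain ⟨l, hl⟩ := hx
  -- ψ has finite order as a permutation
  obtain ⟨n, hn, hψn⟩ : ∃ n > 0, (⇑ψ)^[n] = id := by
    have : IsOfFinOrder ψ.toEquiv := isOfFinOrder_of_finite _
    obtain ⟨n, hn, hpow⟩ := this.exists_pow_eq_one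
    refine ⟨n, hn, ?_⟩
    funext z
    have := congrArg (fun e : Equiv.Perm G => e z) hpow
    simpa [← Equiv.Perm.iterate_eq_pow] using this
  set r := l.length with hr
  refine ⟨l ++ List.replicate (n * r + n - r) 1, fun y => ?_⟩
  have hk : r + (n * r + n - r) = n * (r + 1) := by
    have hle : r ≤ n * r + n := le_trans (Nat.le_mul_of_pos_left r hn) (Nat.le_add_right _ _)
    rw [Nat.mul_succ]
    exact Nat.add_sub_cancel' hle
  rw [List.foldr_append, foldr_replicate_one, foldr_eq_mul_iterate, ← hl, ← hr,
    ← Function.iterate_add_apply, hk, Function.iterate_mul, hψn]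
  simp
end

section
/- Let G be a finite group, ψ an automorphism of G, and s_x(y) = x·ψ(x⁻¹y). Let P be the orbit of the identity e under the group generated by {s_x : x ∈ G}. Then P equals the subgroup of G generated by {x·ψ(x)⁻¹ : x ∈ G}. -/
section aux
variable {G : Type*} [Group G] (ψ : G ≃* G)

lemma orbit_one_mem : (1 : G) ∈ orbitOfIdentity ψ := ⟨[], rfl⟩

lemma orbit_step {p : G} (hp : p ∈ orbitOfIdentity ψ) (a : G) :
    a * ψ (a⁻¹ * p) ∈ orbitOfIdentity ψ := by
  obtain ⟨l, rfl⟩ := hp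
  exact ⟨a :: l, rfl⟩

lemma foldr_map_psi (l : List G) :
    ψ (l.foldr (fun a y => a * ψ (a⁻¹ * y)) 1) =
      (l.map ψ).foldr (fun a y => a * ψ (a⁻¹ * y)) 1 := by
  induction l with
  | nil => simp
  | cons a l ih =>
    rw [List.map_cons, List.foldr_cons, List.foldr_cons, ← ih]
    simp only [map_mul, map_inv]

lemma psi_mem_orbit {p : G} (hp : p ∈ orbitOfIdentity ψ) : ψ p ∈ orbitOfIdentity ψ := by
  obtain ⟨l, rfl⟩ := hp
  exact ⟨l.map ψ, foldr_map_psi ψ l⟩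

lemma psi_inv_mem_orbit [Finite G] {p : G} (hp : p ∈ orbitOfIdentity ψ) :
    ψ.symm p ∈ orbitOfIdentity ψ := by
  have hsub : ψ '' orbitOfIdentity ψ ⊆ orbitOfIdentity ψ := by
    rintro _ ⟨q, hq, rfl⟩; exact psi_mem_orbit ψ hq
  have heq : ψ '' orbitOfIdentity ψ = orbitOfIdentity ψ := by
    apply Set.eq_of_subset_of_ncard_le hsub
    rw [Set.ncard_image_of_injective _ ψ.injective]
  rw [← heq] at hp
  obtain ⟨q, hq, hq2⟩ := hp
  rwa [← hq2, MulEquiv.symm_apply_apply]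

end aux

/-- `P` equals the subgroup of `G` generated by `{x * ψ(x)⁻¹ : x ∈ G}`. -/
theorem orbitOfIdentity_eq_closure {G : Type*} [Group G] [Finite G] (ψ : G ≃* G) :
    orbitOfIdentity ψ =
      (Subgroup.closure {g : G | ∃ x : G, g = x * (ψ x)⁻¹} : Subgroup G) := by
  set S : Set G := {g : G | ∃ x : G, g = x * (ψ x)⁻¹} with hS
  have hψS : ∀ g ∈ S, ψ g ∈ S := by
    rintro _ ⟨x, rfl⟩
    exact ⟨ψ x, by simp [map_mul, map_inv]⟩
  have hinv : ∀ x ∈ Submonoid.closure S, x⁻¹ ∈ Submonoid.closure S := by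
    intro x hx
    have hord : 0 < orderOf x := orderOf_pos x
    have h1 : x ^ (orderOf x - 1) * x = 1 := by
      rw [← pow_succ, Nat.sub_add_cancel hord, pow_orderOf_eq_one]
    have hx' : x ^ (orderOf x - 1) = x⁻¹ := eq_inv_of_mul_eq_one_left h1
    exact hx' ▸ pow_mem hx _
  ext p
  constructor
  · rintro ⟨l, rfl⟩
    show _ ∈ Subgroup.closure S
    induction l with
    | nil => exact one_mem _
    | cons a l ih =>
      simp only [List.foldr_cons]
      have h1 : a * (ψ a)⁻¹ ∈ Subgroup.closure S := Subgroup.subset_closure ⟨a, rfl⟩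
      set F := l.foldr (fun a y => a * ψ (a⁻¹ * y)) 1 with hF
      have h2 : ψ F ∈ Subgroup.closure S := by
        have hmap : ψ F ∈ (Subgroup.closure S).map ψ.toMonoidHom := ⟨F, ih, rfl⟩
        rw [MonoidHom.map_closure] at hmap
        exact Subgroup.closure_mono (by rintro _ ⟨g, hg, rfl⟩; exact hψS g hg) hmap
      have : a * ψ (a⁻¹ * F) = (a * (ψ a)⁻¹) * ψ F := by
        rw [map_mul, map_inv, mul_assoc]
      rw [this]
      exact mul_mem h1 h2
  · intro hp
    have hmon : p ∈ Submonoid.closure S := by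
      refine Subgroup.closure_induction (fun g hg => Submonoid.subset_closure hg)
        (one_mem _) (fun x y _ _ hx hy => mul_mem hx hy) (fun x _ hx => hinv x hx) hp
    refine Submonoid.closure_induction_left (orbit_one_mem ψ) ?_ hmon
    rintro _ ⟨a, rfl⟩ y hy hy'
    have h := orbit_step ψ (psi_inv_mem_orbit ψ hy') a
    rwa [map_mul, MulEquiv.apply_symm_apply, map_inv, ← mul_assoc] at h
end

section
/- Let G, G' be finite groups with identities e, e', ψ ∈ Aut(G), ψ' ∈ Aut(G'), P ⊆ G and P' ⊆ G' the orbits of e and e' under the respective groups generated by point symmetries, and let f : G → G' be a quandle isomorphism from Q(G,ψ) to Q(G',ψ') with f(e) = e'. Then the restriction f|_P : P → P' is a group isomorphism. -/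
section Aux

variable {G G' : Type*} [Group G] [Group G']

private lemma qa_foldr_affine (ψ : G ≃* G) (l : List G) (y : G) :
    l.foldr (fun a z => a * ψ (a⁻¹ * z)) y
      = l.foldr (fun a z => a * ψ (a⁻¹ * z)) 1 * (⇑ψ)^[l.length] y := by
  induction l generalizing y with
  | nil => simp
  | cons a l ih =>
    simp only [List.foldr_cons, List.length_cons, Function.iterate_succ', Function.comp_apply]
    rw [ih y, ih 1]
    simp [mul_assoc, map_mul]

private lemma qa_foldr_ones (ψ : G ≃* G) (k : ℕ) :
    (List.replicate k (1:G)).foldr (fun a z => a * ψ (a⁻¹ * z)) 1 = 1 := by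
  induction k with
  | zero => simp
  | succ k ih => rw [List.replicate_succ, List.foldr_cons, ih]; simp

private lemma qa_intertwine (ψ : G ≃* G) (ψ' : G' ≃* G') (f : G → G')
    (hmor : ∀ x y : G, f (x * ψ (x⁻¹ * y)) = f x * ψ' ((f x)⁻¹ * f y))
    (l : List G) (y : G) :
    f (l.foldr (fun a z => a * ψ (a⁻¹ * z)) y)
      = (l.map f).foldr (fun a z => a * ψ' (a⁻¹ * z)) (f y) := by
  induction l with
  | nil => simp
  | cons a l ih =>
    rw [List.foldr_cons, hmor, ih, List.map_cons, List.foldr_cons]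

private lemma qa_finite_order (ψ : G ≃* G) [Finite G] :
    ∃ n > 0, ∀ y : G, (⇑ψ)^[n] y = y := by
  have : Finite (MulAut G) := Finite.of_injective (fun e => ⇑e) DFunLike.coe_injective
  obtain ⟨n, hn, h⟩ := isOfFinOrder_iff_pow_eq_one.mp (isOfFinOrder_of_finite (ψ : MulAut G))
  refine ⟨n, hn, fun y => ?_⟩
  have hiter : ∀ m : ℕ, ∀ y : G, ((ψ : MulAut G) ^ m) y = (⇑ψ)^[m] y := by
    intro m
    induction m with
    | zero => intro y; rfl
    | succ m ih =>
      intro y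
      rw [pow_succ', Function.iterate_succ', Function.comp_apply, ← ih]
      rfl
  rw [← hiter, h]; rfl

end Aux

/-- If `f` is a quandle isomorphism from `Q(G, ψ)` to `Q(G', ψ')` with `f(e) = e'`, then
the restriction of `f` to `P` is a group isomorphism onto `P'`: it maps `P` bijectively
onto `P'` and is multiplicative on `P`. -/
theorem quandle_iso_restricts_to_group_iso {G G' : Type*} [Group G] [Group G']
    [Finite G] [Finite G'] (ψ : G ≃* G) (ψ' : G' ≃* G') (f : G → G')
    (hbij : Function.Bijective f)
    (hmor : ∀ x y : G, f (x * ψ (x⁻¹ * y)) = f x * ψ' ((f x)⁻¹ * f y))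
    (hone : f 1 = 1) :
    Set.BijOn f (orbitOfIdentity ψ) (orbitOfIdentity ψ') ∧
    (∀ x ∈ orbitOfIdentity ψ, ∀ y ∈ orbitOfIdentity ψ, f (x * y) = f x * f y) := by
  obtain ⟨g, hgf, hfg⟩ := Function.bijective_iff_has_inverse.mp hbij
  have hginj : Function.Injective g := Function.LeftInverse.injective hfg
  have hg1 : g 1 = 1 := by rw [← hone, hgf]
  have hgmor : ∀ x y : G', g (x * ψ' (x⁻¹ * y)) = g x * ψ ((g x)⁻¹ * g y) := by
    intro x y
    apply hbij.injective
    rw [hmor, hfg, hfg, hfg]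
  have hmaps : Set.MapsTo f (orbitOfIdentity ψ) (orbitOfIdentity ψ') := by
    rintro x ⟨l, rfl⟩
    exact ⟨l.map f, by rw [qa_intertwine ψ ψ' f hmor, hone]⟩
  have hgmaps : Set.MapsTo g (orbitOfIdentity ψ') (orbitOfIdentity ψ) := by
    rintro x ⟨l, rfl⟩
    exact ⟨l.map g, by rw [qa_intertwine ψ' ψ g hgmor, hg1]⟩
  constructor
  · refine ⟨hmaps, hbij.injective.injOn, fun y hy => ⟨g y, hgmaps hy, hfg y⟩⟩
  · rintro x ⟨lx, rfl⟩ y hy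
    obtain ⟨n, hn, hψ⟩ := qa_finite_order ψ
    obtain ⟨n', hn', hψ'⟩ := qa_finite_order ψ'
    -- pad lx so its length is a multiple of n * n'
    set m := n * n' with hm
    have hm0 : 0 < m := Nat.mul_pos hn hn'
    set l := lx ++ List.replicate (m * (lx.length + 1) - lx.length) (1:G) with hl
    have hlen : l.length = m * (lx.length + 1) := by
      have : lx.length ≤ m * (lx.length + 1) :=
        le_trans (Nat.le_succ _) (Nat.le_mul_of_pos_left _ hm0)
      simp [hl, List.length_append, List.length_replicate, Nat.add_sub_cancel' this]
    have hx : lx.foldr (fun a z => a * ψ (a⁻¹ * z)) 1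
        = l.foldr (fun a z => a * ψ (a⁻¹ * z)) 1 := by
      rw [hl, List.foldr_append, qa_foldr_ones]
    have hidψ : (⇑ψ)^[n] = id := funext hψ
    have hidψ' : (⇑ψ')^[n'] = id := funext hψ'
    have hlen1 : l.length = n * (n' * (lx.length + 1)) := by rw [hlen, hm]; ring
    have hlen2 : l.length = n' * (n * (lx.length + 1)) := by rw [hlen, hm]; ring
    have hiterψ : (⇑ψ)^[l.length] = id := by
      rw [hlen1, Function.iterate_mul, hidψ, Function.iterate_id]
    have hiterψ' : (⇑ψ')^[l.length] = id := by
      rw [hlen2, Function.iterate_mul, hidψ', Function.iterate_id]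
    have key : lx.foldr (fun a z => a * ψ (a⁻¹ * z)) 1 * y
        = l.foldr (fun a z => a * ψ (a⁻¹ * z)) y := by
      rw [hx, qa_foldr_affine ψ l y, hiterψ]; rfl
    rw [key, qa_intertwine ψ ψ' f hmor, qa_foldr_affine ψ' (l.map f) (f y)]
    have : (⇑ψ')^[(l.map f).length] (f y) = f y := by
      rw [List.length_map, hiterψ']; rfl
    rw [this, hx, qa_intertwine ψ ψ' f hmor, hone]
end

section
/- Let G, G' be finite groups, ψ ∈ Aut(G), ψ' ∈ Aut(G'), and f : G → G' a quandle isomorphism from Q(G,ψ) to Q(G',ψ') with f(e) = e'. Let P and P' be the orbits of e and e' as subgroups of G and G'. Then f(xP) = f(x)P' for every x ∈ G. -/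
/-- Left translation conjugates the point symmetries: `x * foldr s 1 l = foldr s x (x•l)`. -/
lemma translate_foldr {G : Type*} [Group G] (ψ : G ≃* G) (x : G) (l : List G) (z : G) :
    x * l.foldr (fun a y => a * ψ (a⁻¹ * y)) z
      = (l.map (fun a => x * a)).foldr (fun a y => a * ψ (a⁻¹ * y)) (x * z) := by
  induction l with
  | nil => simp
  | cons a t ih =>
      simp only [List.foldr, List.map, ← ih]
      group

/-- `f` maps the symmetry-fold to the corresponding fold in `G'`. -/
lemma f_foldr {G G' : Type*} [Group G] [Group G'] (ψ : G ≃* G) (ψ' : G' ≃* G') (f : G → G')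
    (hmor : ∀ x y : G, f (x * ψ (x⁻¹ * y)) = f x * ψ' ((f x)⁻¹ * f y))
    (l : List G) (z : G) :
    f (l.foldr (fun a y => a * ψ (a⁻¹ * y)) z)
      = (l.map f).foldr (fun a y => a * ψ' (a⁻¹ * y)) (f z) := by
  induction l with
  | nil => rfl
  | cons a t ih => simp only [List.foldr_cons, List.map_cons, hmor, ih]

/-- If `f` is a quandle isomorphism from `Q(G, ψ)` to `Q(G', ψ')` with `f(e) = e'`,
then `f(xP) = f(x)P'` for every `x ∈ G`. -/
theorem quandle_iso_maps_cosets {G G' : Type*} [Group G] [Group G']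
    [Finite G] [Finite G'] (ψ : G ≃* G) (ψ' : G' ≃* G') (f : G → G')
    (hbij : Function.Bijective f)
    (hmor : ∀ x y : G, f (x * ψ (x⁻¹ * y)) = f x * ψ' ((f x)⁻¹ * f y))
    (hone : f 1 = 1) :
    ∀ x : G, f '' ((fun p => x * p) '' orbitOfIdentity ψ) =
      (fun p' => f x * p') '' orbitOfIdentity ψ' := by
  intro x
  ext w
  constructor
  · rintro ⟨-, ⟨p, ⟨l, rfl⟩, rfl⟩, rfl⟩
    refine ⟨(f x)⁻¹ * f (x * l.foldr (fun a y => a * ψ (a⁻¹ * y)) 1), ?_, by group⟩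
    rw [translate_foldr ψ x l 1, mul_one, f_foldr ψ ψ' f hmor]
    -- now express `(f x)⁻¹ * foldr ... (f x)` as a fold from 1
    have := translate_foldr ψ' ((f x)⁻¹)
      ((l.map (fun a => x * a)).map f) (f x)
    rw [this, inv_mul_cancel]
    exact ⟨_, rfl⟩
  · rintro ⟨-, ⟨l', rfl⟩, rfl⟩
    -- pull back the translated list `(f x * ·) '' l'` along f using surjectivity
    obtain ⟨l, hl⟩ : ∃ l : List G, l.map f = l'.map (fun a => f x * a) := by
      induction l' with
      | nil => exact ⟨[], rfl⟩
      | cons a t ih =>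
          obtain ⟨t0, ht0⟩ := ih
          obtain ⟨b, hb⟩ := hbij.2 (f x * a)
          exact ⟨b :: t0, by simp [ht0, hb]⟩
    refine ⟨x * (x⁻¹ * (l.foldr (fun a y => a * ψ (a⁻¹ * y)) x)),
      ⟨x⁻¹ * (l.foldr (fun a y => a * ψ (a⁻¹ * y)) x), ?_, rfl⟩, ?_⟩
    · have := translate_foldr ψ (x⁻¹) l x
      rw [this, inv_mul_cancel]
      exact ⟨_, rfl⟩
    · rw [mul_inv_cancel_left, f_foldr ψ ψ' f hmor l x, hl]
      have := translate_foldr ψ' (f x) l' 1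
      rw [mul_one] at this
      rw [← this]
end

section
/- Let G be a finite simple group and ψ, ψ' ∈ Aut(G) with ψ, ψ' ≠ id. Then Q(G,ψ) and Q(G,ψ') are isomorphic as quandles if and only if ψ and ψ' are conjugate in Aut(G). -/
/-- For a finite simple group `G` and non-identity automorphisms `ψ, ψ'`, the generalized
Alexander quandles `Q(G, ψ)` and `Q(G, ψ')` are isomorphic as quandles if and only if
`ψ` and `ψ'` are conjugate in `Aut(G)`. -/
theorem quandle_iso_iff_conjugate_of_simple {G : Type*} [Group G] [Finite G]
    [IsSimpleGroup G] (ψ ψ' : G ≃* G)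
    (hψ : ψ ≠ MulEquiv.refl G) (hψ' : ψ' ≠ MulEquiv.refl G) :
    (∃ f : G → G, Function.Bijective f ∧
      ∀ x y : G, f (x * ψ (x⁻¹ * y)) = f x * ψ' ((f x)⁻¹ * f y)) ↔
    (∃ τ : G ≃* G, ∀ x : G, ψ' x = τ (ψ (τ.symm x))) := by
  constructor
  · rintro ⟨f, hfb, hf⟩
    -- normalize so that the map sends 1 to 1
    set g : G → G := fun y => (f 1)⁻¹ * f y with hgdef
    have hgb : Function.Bijective g := by
      have : g = (fun z => (f 1)⁻¹ * z) ∘ f := rfl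
      rw [this]
      exact (Equiv.mulLeft ((f 1)⁻¹)).bijective.comp hfb
    have hg1 : g 1 = 1 := by simp [hgdef]
    have hgq : ∀ x y : G, g (x * ψ (x⁻¹ * y)) = g x * ψ' ((g x)⁻¹ * g y) := by
      intro x y
      have harg : ((f 1)⁻¹ * f x)⁻¹ * ((f 1)⁻¹ * f y) = (f x)⁻¹ * f y := by group
      simp only [hgdef, harg, hf x y, mul_assoc]
    -- the map intertwines ψ and ψ'
    have h1 : ∀ y : G, g (ψ y) = ψ' (g y) := by
      intro y
      have := hgq 1 y
      simpa [hg1] using this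
    -- the key translation property
    have h2 : ∀ x y : G, g (x * ψ x⁻¹ * y) = g x * ψ' (g x)⁻¹ * g y := by
      intro x y
      have h := hgq x (ψ.symm y)
      rw [map_mul, MulEquiv.apply_symm_apply, map_mul, ← h1, MulEquiv.apply_symm_apply] at h
      rw [mul_assoc, mul_assoc]
      exact h
    -- the subgroup generated by { x * ψ x⁻¹ } is all of G
    set S : Set G := {z : G | ∃ x : G, z = x * ψ x⁻¹} with hSdef
    set H : Subgroup G := Subgroup.closure S with hHdef
    have hconj : ∀ z ∈ S, ∀ c : G, c * z * c⁻¹ ∈ H := by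
      rintro z ⟨x, rfl⟩ c
      have e1 : c * (x * ψ x⁻¹) * c⁻¹ = (c * x * ψ (c * x)⁻¹) * (c * ψ c⁻¹)⁻¹ := by
        simp only [mul_inv_rev, map_mul, map_inv]
        group
      rw [e1]
      exact mul_mem (Subgroup.subset_closure ⟨c * x, rfl⟩)
        (inv_mem (Subgroup.subset_closure ⟨c, rfl⟩))
    have hnormal : H.Normal := by
      constructor
      intro n hn c
      have key : H.map (MulAut.conj c).toMonoidHom ≤ H := by
        rw [hHdef, MonoidHom.map_closure, Subgroup.closure_le]
        rintro _ ⟨z, hz, rfl⟩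
        exact hconj z hz c
      exact key ⟨n, hn, rfl⟩
    have hne : H ≠ ⊥ := by
      have : ¬ ∀ a : G, ψ a = a := fun h => hψ (MulEquiv.ext h)
      push_neg at this
      obtain ⟨a, ha⟩ := this
      intro hbot
      have hmem : a * ψ a⁻¹ ∈ H := Subgroup.subset_closure ⟨a, rfl⟩
      rw [hbot, Subgroup.mem_bot] at hmem
      apply ha
      have hcongr : ψ a⁻¹ = a⁻¹ := eq_inv_of_mul_eq_one_right hmem
      rw [map_inv] at hcongr
      exact inv_injective hcongr
    have htop : H = ⊤ := hnormal.eq_bot_or_eq_top.resolve_left hne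
    -- multiplicativity
    have hmul : ∀ a b : G, g (a * b) = g a * g b := by
      set K : Subgroup G :=
        { carrier := {a : G | ∀ y : G, g (a * y) = g a * g y}
          one_mem' := by intro y; simp [hg1]
          mul_mem' := by
            intro a b ha hb y
            calc g (a * b * y) = g (a * (b * y)) := by rw [mul_assoc]
              _ = g a * g (b * y) := ha (b * y)
              _ = g a * (g b * g y) := by rw [hb y]
              _ = g (a * b) * g y := by rw [ha b]; exact (mul_assoc _ _ _).symm
          inv_mem' := by
            intro a ha
            have h0 := ha a⁻¹
            rw [mul_inv_cancel, hg1] at h0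
            have hinv : g a⁻¹ = (g a)⁻¹ := (inv_eq_of_mul_eq_one_right h0.symm).symm
            intro y
            have h3 := ha (a⁻¹ * y)
            rw [← mul_assoc, mul_inv_cancel, one_mul] at h3
            rw [hinv, eq_inv_mul_iff_mul_eq]
            exact h3.symm } with hKdef
      have hSK : S ⊆ K := by
        rintro _ ⟨x, rfl⟩ y
        have hx1 := h2 x 1
        rw [mul_one, hg1, mul_one] at hx1
        rw [h2 x y, hx1]
      have : H ≤ K := Subgroup.closure_le K |>.mpr hSK
      rw [htop] at this
      intro a b
      exact this (Subgroup.mem_top a) b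
    -- build the group isomorphism
    refine ⟨MulEquiv.ofBijective (MonoidHom.mk' g hmul) hgb, ?_⟩
    intro x
    set τ : G ≃* G := MulEquiv.ofBijective (MonoidHom.mk' g hmul) hgb with hτdef
    have happ : ∀ z : G, τ z = g z := fun z => rfl
    calc ψ' x = ψ' (τ (τ.symm x)) := by rw [MulEquiv.apply_symm_apply]
      _ = ψ' (g (τ.symm x)) := by rw [happ]
      _ = g (ψ (τ.symm x)) := (h1 _).symm
      _ = τ (ψ (τ.symm x)) := rfl
  · rintro ⟨τ, hτ⟩
    refine ⟨τ, τ.bijective, fun x y => ?_⟩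
    have : ψ' ((τ x)⁻¹ * τ y) = τ (ψ (x⁻¹ * y)) := by
      rw [hτ]
      congr 1
      simp [map_mul, map_inv]
    rw [this, ← map_mul]
end

section
/- Let n ≥ 5 and ψ ∈ Aut(S_n) with ψ ≠ id, where S_n is the symmetric group on n letters. Then the subgroup of S_n generated by {x·ψ(x)⁻¹ : x ∈ S_n} equals the alternating group A_n. -/
open Equiv

open Equiv.Perm in
/-- Any automorphism of `S_n` maps even permutations to even permutations. -/
lemma aux_map_alt {n : ℕ} (ψ : Perm (Fin n) ≃* Perm (Fin n)) {x : Perm (Fin n)}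
    (hx : x ∈ alternatingGroup (Fin n)) : ψ x ∈ alternatingGroup (Fin n) := by
  rw [← closure_three_cycles_eq_alternating] at hx
  induction hx using Subgroup.closure_induction with
  | mem y hy =>
    have hy3 : y ^ 3 = 1 := by
      rw [← hy.orderOf]; exact pow_orderOf_eq_one y
    have h3 : (ψ y) ^ 3 = 1 := by rw [← map_pow, hy3, map_one]
    have hs : (Perm.sign (ψ y)) ^ 3 = 1 := by
      rw [← map_pow, h3, map_one]
    rw [mem_alternatingGroup]
    rcases Int.units_eq_one_or (Perm.sign (ψ y)) with h | h
    · exact h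
    · exfalso
      rw [h] at hs
      exact absurd hs (by decide)
  | one => rw [map_one]; exact one_mem _
  | mul a b _ _ ha hb => rw [map_mul]; exact mul_mem ha hb
  | inv a _ ha => rw [map_inv]; exact inv_mem ha

/-- Any automorphism of `S_n` preserves the sign. -/
lemma aux_sign {n : ℕ} (ψ : Perm (Fin n) ≃* Perm (Fin n)) (x : Perm (Fin n)) :
    Perm.sign (ψ x) = Perm.sign x := by
  rcases Int.units_eq_one_or (Perm.sign x) with h | h
  · have := aux_map_alt ψ (Perm.mem_alternatingGroup.2 h)
    rw [Perm.mem_alternatingGroup] at this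
    rw [this, h]
  · rcases Int.units_eq_one_or (Perm.sign (ψ x)) with h' | h'
    · exfalso
      have hmem := aux_map_alt ψ.symm (Perm.mem_alternatingGroup.2 h')
      rw [MulEquiv.symm_apply_apply, Perm.mem_alternatingGroup, h] at hmem
      exact absurd hmem (by decide)
    · rw [h, h']

open Equiv.Perm in
/-- A nontrivial normal subgroup of `S_n`, `n ≥ 5`, contains a three-cycle. -/
lemma aux_three_cycle {n : ℕ} (hn : 5 ≤ n) {P : Subgroup (Perm (Fin n))}
    (hN : P.Normal) {σ : Perm (Fin n)} (hσP : σ ∈ P) (hσ1 : σ ≠ 1) :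
    ∃ f ∈ P, IsThreeCycle f := by
  obtain ⟨a, ha⟩ : ∃ a, σ a ≠ a := by
    by_contra h
    push_neg at h
    exact hσ1 (Equiv.ext h)
  have hba : σ a ≠ a := ha
  have hσbb : σ (σ a) ≠ σ a := fun h => hba (σ.injective h)
  -- choose c outside {a, σ a, σ (σ a)}
  obtain ⟨c, hc⟩ : ∃ c, c ∉ ({a, σ a, σ (σ a)} : Finset (Fin n)) := by
    have hcard : ({a, σ a, σ (σ a)} : Finset (Fin n)).card ≤ 3 :=
      (Finset.card_insert_le _ _).trans (Nat.succ_le_succ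
        ((Finset.card_insert_le _ _).trans (by simp)))
    have hne : (({a, σ a, σ (σ a)} : Finset (Fin n))ᶜ).Nonempty := by
      rw [← Finset.card_pos, Finset.card_compl, Fintype.card_fin]
      omega
    obtain ⟨c, hc⟩ := hne
    exact ⟨c, Finset.mem_compl.1 hc⟩
  simp only [Finset.mem_insert, Finset.mem_singleton, not_or] at hc
  obtain ⟨hca, hcb, hcσb⟩ := hc
  set b := σ a with hbdef
  set b' := σ b with hb'def
  set c' := σ c with hc'def
  have hbc : b ≠ c := fun h => hcb h.symm
  have hb'b : b' ≠ b := hσbb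
  have hb'c : b' ≠ c := fun h => hcσb h.symm
  have hb'c' : b' ≠ c' := fun h => hbc (σ.injective (by rw [← hb'def, ← hc'def, h]))
  -- the commutator of σ with swap b c
  have hρP : swap b' c' * swap b c ∈ P := by
    have h1 : swap b c * σ⁻¹ * (swap b c)⁻¹ ∈ P := hN.conj_mem _ (inv_mem hσP) _
    have h2 : σ * (swap b c * σ⁻¹ * (swap b c)⁻¹) ∈ P := mul_mem hσP h1
    have heq : σ * (swap b c * σ⁻¹ * (swap b c)⁻¹) = swap b' c' * swap b c := by
      rw [hb'def, hc'def, swap_apply_apply, swap_inv]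
      group
    rwa [heq] at h2
  by_cases h1 : c' = b
  · refine ⟨swap b' c' * swap b c, hρP, ?_⟩
    rw [h1, swap_comm b' b]
    exact isThreeCycle_swap_mul_swap_same hb'b.symm hbc hb'c
  by_cases h2 : c' = c
  · refine ⟨swap b' c' * swap b c, hρP, ?_⟩
    rw [h2, swap_comm b' c, swap_comm b c]
    exact isThreeCycle_swap_mul_swap_same hb'c.symm hcb hb'b
  -- now swap b' c' and swap b c are disjoint; take a further commutator
  · obtain ⟨e, he⟩ : ∃ e, e ∉ ({b, c, b', c'} : Finset (Fin n)) := by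
      have hcard : ({b, c, b', c'} : Finset (Fin n)).card ≤ 4 :=
        (Finset.card_insert_le _ _).trans (Nat.succ_le_succ
          ((Finset.card_insert_le _ _).trans (Nat.succ_le_succ
            ((Finset.card_insert_le _ _).trans (by simp)))))
      have hne : (({b, c, b', c'} : Finset (Fin n))ᶜ).Nonempty := by
        rw [← Finset.card_pos, Finset.card_compl, Fintype.card_fin]
        omega
      obtain ⟨e, he⟩ := hne
      exact ⟨e, Finset.mem_compl.1 he⟩
    simp only [Finset.mem_insert, Finset.mem_singleton, not_or] at he
    obtain ⟨heb, hec, heb', hec'⟩ := he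
    have hρ'P : swap b e * (swap b' c' * swap b c) * (swap b e)⁻¹ *
        (swap b' c' * swap b c)⁻¹ ∈ P :=
      mul_mem (hN.conj_mem _ hρP (swap b e)) (inv_mem hρP)
    -- commutation facts
    have e1 : swap b' c' * swap e c = swap e c * swap b' c' := by
      have hd : Perm.Disjoint (swap b' c') (swap e c) := by
        rw [disjoint_iff_disjoint_support, support_swap hb'c',
          support_swap (fun h : e = c => hec h)]
        simp only [Finset.disjoint_insert_left, Finset.disjoint_singleton_left,
          Finset.mem_insert, Finset.mem_singleton, not_or]
        exact ⟨⟨fun h => heb' h.symm, hb'c⟩, ⟨fun h => hec' h.symm, h2⟩⟩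
      exact hd.commute.eq
    have e2 : swap b' c' * swap b c = swap b c * swap b' c' := by
      have hd : Perm.Disjoint (swap b' c') (swap b c) := by
        rw [disjoint_iff_disjoint_support, support_swap hb'c', support_swap hbc]
        simp only [Finset.disjoint_insert_left, Finset.disjoint_singleton_left,
          Finset.mem_insert, Finset.mem_singleton, not_or]
        exact ⟨⟨hb'b, hb'c⟩, ⟨h1, h2⟩⟩
      exact hd.commute.eq
    have hδρ : swap b e * (swap b' c' * swap b c) * (swap b e)⁻¹ =
        swap b' c' * swap e c := by
      have h' : swap b e * (swap b' c' * swap b c) * (swap b e)⁻¹ =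
          (swap b e * swap b' c' * (swap b e)⁻¹) * (swap b e * swap b c * (swap b e)⁻¹) := by
        group
      rw [h', ← swap_apply_apply, ← swap_apply_apply,
        swap_apply_of_ne_of_ne hb'b (fun h => heb' h.symm),
        swap_apply_of_ne_of_ne h1 (fun h => hec' h.symm),
        swap_apply_left,
        swap_apply_of_ne_of_ne (fun h => hbc h.symm) (fun h => hec h.symm)]
    have hkey : swap b e * (swap b' c' * swap b c) * (swap b e)⁻¹ *
        (swap b' c' * swap b c)⁻¹ = swap c e * swap c b := by
      rw [hδρ, mul_inv_rev, swap_inv, swap_inv]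
      calc swap b' c' * swap e c * (swap b c * swap b' c')
          = swap e c * (swap b' c' * swap b c * swap b' c') := by rw [e1]; group
        _ = swap e c * (swap b c * swap b' c' * swap b' c') := by rw [e2]
        _ = swap e c * swap b c := by
            rw [mul_assoc (swap b c), swap_mul_self, mul_one]
        _ = swap c e * swap c b := by rw [swap_comm e c, swap_comm b c]
    refine ⟨_, hρ'P, ?_⟩
    rw [hkey]
    exact isThreeCycle_swap_mul_swap_same (fun h => hec h.symm) (fun h => hbc h.symm) heb

open Equiv.Perm in
/-- For `n ≥ 5` and a non-identity automorphism `ψ` of the symmetric group `S_n`, the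
subgroup generated by `{x * ψ(x)⁻¹ : x ∈ S_n}` equals the alternating group `A_n`. -/
theorem closure_eq_alternatingGroup {n : ℕ} (hn : 5 ≤ n)
    (ψ : Perm (Fin n) ≃* Perm (Fin n)) (hψ : ψ ≠ MulEquiv.refl (Perm (Fin n))) :
    Subgroup.closure {g : Perm (Fin n) | ∃ x : Perm (Fin n), g = x * (ψ x)⁻¹} =
      alternatingGroup (Fin n) := by
  set S : Set (Perm (Fin n)) := {g : Perm (Fin n) | ∃ x : Perm (Fin n), g = x * (ψ x)⁻¹}
    with hSdef
  set P := Subgroup.closure S with hPdef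
  -- P ≤ A_n
  have hPA : P ≤ alternatingGroup (Fin n) := by
    rw [hPdef]
    refine (Subgroup.closure_le _).2 ?_
    rintro g ⟨x, rfl⟩
    rw [SetLike.mem_coe, mem_alternatingGroup, map_mul, map_inv, aux_sign ψ x,
      mul_inv_cancel]
  -- P is normal
  have hN : P.Normal := by
    constructor
    intro m hm g
    induction hm using Subgroup.closure_induction with
    | mem y hy =>
      obtain ⟨x, rfl⟩ := hy
      have heq : g * (x * (ψ x)⁻¹) * g⁻¹ =
          (g * x) * (ψ (g * x))⁻¹ * ((g * (ψ g)⁻¹))⁻¹ := by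
        rw [map_mul]; group
      rw [heq]
      exact mul_mem (Subgroup.subset_closure ⟨g * x, rfl⟩)
        (inv_mem (Subgroup.subset_closure ⟨g, rfl⟩))
    | one => simpa using one_mem P
    | mul x y _ _ hx hy =>
      have heq : g * (x * y) * g⁻¹ = (g * x * g⁻¹) * (g * y * g⁻¹) := by group
      rw [heq]; exact mul_mem hx hy
    | inv x _ hx =>
      have heq : g * x⁻¹ * g⁻¹ = (g * x * g⁻¹)⁻¹ := by group
      rw [heq]; exact inv_mem hx
  -- P is nontrivial
  obtain ⟨x, hx⟩ : ∃ x, ψ x ≠ x := by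
    by_contra h
    push_neg at h
    exact hψ (MulEquiv.ext h)
  have hσP : x * (ψ x)⁻¹ ∈ P := Subgroup.subset_closure ⟨x, rfl⟩
  have hσ1 : x * (ψ x)⁻¹ ≠ 1 := by
    intro h
    exact hx (mul_inv_eq_one.1 h).symm
  -- A_n ≤ P
  have hAP : alternatingGroup (Fin n) ≤ P := by
    obtain ⟨f, hfP, hf⟩ := aux_three_cycle hn hN hσP hσ1
    rw [← closure_three_cycles_eq_alternating]
    refine (Subgroup.closure_le _).2 ?_
    intro g hg
    have hconj : IsConj f g := isConj_iff_cycleType_eq.2 (hf.trans hg.symm)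
    obtain ⟨π, hπ⟩ := isConj_iff.1 hconj
    rw [SetLike.mem_coe, ← hπ]
    exact hN.conj_mem f hfP π
  exact le_antisymm hPA hAP
end

section
/- Let m, c be integers with m a positive integer. Then there exists an integer p with gcd(n,p) = 1 (for any given positive integer n) such that p·c ≡ gcd(m,c) (mod m). -/
/-!
Bézout gives `g = m a + c v` with `g = gcd(m, c)`, so `v c ≡ g (mod m)` and `v` is a unit
modulo `m / g`. Moreover `p c ≡ v c (mod m)` as soon as `p ≡ v (mod m / g)`, and by
Dirichlet's theorem that residue class contains primes larger than `|n|`, hence coprime to `n`.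
-/

namespace Int

theorem exists_isCoprime_div_gcd_mul_modEq_gcd {m : ℤ} (hm : m ≠ 0) (c : ℤ) :
    ∃ v : ℤ, IsCoprime v (m / m.gcd c) ∧ v * c ≡ m.gcd c [ZMOD m] := by
  have hg : (m.gcd c : ℤ) ≠ 0 := by exact_mod_cast (gcd_pos_of_ne_zero_left c hm).ne'
  have hbezout := gcd_eq_gcd_ab m c
  refine ⟨m.gcdB c, ⟨c / m.gcd c, m.gcdA c, ?_⟩,
    modEq_iff_dvd.2 ⟨m.gcdA c, by linear_combination hbezout⟩⟩
  apply mul_left_cancel₀ hg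
  calc (m.gcd c : ℤ) * (c / m.gcd c * m.gcdB c + m.gcdA c * (m / m.gcd c))
      = c * m.gcdB c + m.gcdA c * m := by
        rw [mul_add, ← mul_assoc, Int.mul_ediv_cancel' (gcd_dvd_right m c), mul_left_comm,
          Int.mul_ediv_cancel' (gcd_dvd_left m c)]
    _ = m.gcd c * 1 := by linear_combination -hbezout

theorem ModEq.mul_right_of_ediv {a b c d m : ℤ} (hdm : d ∣ m) (hdc : d ∣ c)
    (h : a ≡ b [ZMOD m / d]) : a * c ≡ b * c [ZMOD m] := by
  have hd : a * d ≡ b * d [ZMOD m] := by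
    simpa only [Int.ediv_mul_cancel hdm] using h.mul_right' (c := d)
  simpa only [mul_assoc, Int.mul_ediv_cancel' hdc] using hd.mul_right (c / d)

theorem exists_isCoprime_modEq {n k v : ℤ} (hn : n ≠ 0) (hk : k ≠ 0) (hv : IsCoprime v k) :
    ∃ p : ℤ, IsCoprime n p ∧ p ≡ v [ZMOD k] := by
  have : NeZero k.natAbs := ⟨natAbs_ne_zero.2 hk⟩
  have hunit : IsUnit (v : ZMod k.natAbs) :=
    (ZMod.coe_int_isUnit_iff_isCoprime v _).2 (by rw [natCast_natAbs]; exact hv.symm.abs_left)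
  obtain ⟨p, hpn, hp, hpv⟩ := Nat.forall_exists_prime_gt_and_eq_mod hunit n.natAbs
  refine ⟨p, isCoprime_iff_nat_coprime.2 ?_, ?_⟩
  · exact (hp.coprime_iff_not_dvd.2 (Nat.not_dvd_of_pos_of_lt (natAbs_pos.2 hn) hpn)).symm
  · rw [← modEq_natAbs, ← ZMod.intCast_eq_intCast_iff]
    exact_mod_cast hpv

end Int

/-- For integers `m > 0` and `c`, and any positive integer `n`, there exists `p` coprime
to `n` with `p * c ≡ gcd(m, c) (mod m)`. -/
theorem exists_coprime_mul_congr_gcd (m c : ℤ) (hm : 0 < m) (n : ℤ) (hn : 0 < n) :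
    ∃ p : ℤ, IsCoprime n p ∧ p * c ≡ (Int.gcd m c : ℤ) [ZMOD m] := by
  obtain ⟨v, hv, hvc⟩ := Int.exists_isCoprime_div_gcd_mul_modEq_gcd hm.ne' c
  have hk : m / m.gcd c ≠ 0 := fun h0 ↦ hm.ne' <| by
    rw [← Int.ediv_mul_cancel (Int.gcd_dvd_left m c), h0, zero_mul]
  obtain ⟨p, hnp, hpv⟩ := Int.exists_isCoprime_modEq hn.ne' hk hv
  have hpc := hpv.mul_right_of_ediv (Int.gcd_dvd_left m c) (Int.gcd_dvd_right m c)
  exact ⟨p, hnp, hpc.trans hvc⟩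
end

section
/- Let D_n = ⟨σ, τ : σⁿ = τ² = e, στ = τσ⁻¹⟩ be the dihedral group of order 2n. For a coprime to n and b ∈ Z/nZ, let φ_{a,b} be the automorphism of D_n with φ_{a,b}(τ^ε σ^i) = τ^ε σ^{ai+εb}. Then φ_{a,b} and φ_{a',b'} are conjugate in Aut(D_n) if and only if a ≡ a' (mod n) and gcd(n, 1−a, b) = gcd(n, 1−a', b'). -/
/-!
Conjugating `φ` by `τ` transports the subgroup generated by the displacements `x⁻¹ * φ x`
along `τ`, so its order is a conjugacy invariant. For `φ_{a,b}` this subgroup is the rotation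
subgroup generated by `r (1 - a)` and `r b`, of order `n / gcd(n, 1 - a, b)`. Every automorphism
of `D_n` with `n ≠ 2` sends `r 1` to a rotation, which forces `a = a'`; for `n = 2` the only unit
is `1`. Conversely, equal gcds make `b` and `b'` associates modulo `m = gcd(n, 1 - a)`; lifting
the unit from `ZMod m` to `ZMod n` gives `b' = b c + (1 - a) d`, and `φ_{c,d}` conjugates
`φ_{a,b}` into `φ_{a,b'}`.
-/

open DihedralGroup

namespace ZMod

lemma natCast_gcd_val {n : ℕ} [NeZero n] (x : ZMod n) :
    ((Nat.gcd n x.val : ℕ) : ZMod n) = x * Nat.gcdB n x.val := by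
  have h := congrArg (Int.cast : ℤ → ZMod n) (Nat.gcd_eq_gcd_ab n x.val)
  push_cast [natCast_self, natCast_zmod_val] at h
  rw [h, zero_mul, zero_add]

lemma gcd_val_natCast (m k : ℕ) : Nat.gcd m (k : ZMod m).val = Nat.gcd m k := by
  rw [val_natCast, Nat.gcd_comm, ← Nat.gcd_rec]

lemma gcd_val_unit_mul {m : ℕ} (v : (ZMod m)ˣ) (z : ZMod m) :
    Nat.gcd m ((v : ZMod m) * z).val = Nat.gcd m z.val := by
  rw [val_mul, Nat.gcd_comm, ← Nat.gcd_rec,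
    (val_coe_unit_coprime v).gcd_mul_left_cancel_right]

lemma eq_unit_mul_gcd (m k : ℕ) : ∃ v : (ZMod m)ˣ, (k : ZMod m) = v * (Nat.gcd m k : ℕ) := by
  obtain ⟨d, hd, v, hv, hk⟩ := eq_unit_mul_divisor (k : ZMod m)
  have hgcd : Nat.gcd m k = d := by
    rw [← gcd_val_natCast, hk, ← hv.unit_spec, gcd_val_unit_mul, gcd_val_natCast,
      Nat.gcd_eq_right hd]
  exact ⟨hv.unit, by rw [hgcd, hk, hv.unit_spec]⟩

lemma exists_natCast_mul_unit_eq {m x y : ℕ} (h : Nat.gcd m x = Nat.gcd m y) :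
    ∃ u : (ZMod m)ˣ, (x : ZMod m) * u = y := by
  obtain ⟨v, hv⟩ := eq_unit_mul_gcd m x
  obtain ⟨w, hw⟩ := eq_unit_mul_gcd m y
  refine ⟨v⁻¹ * w, ?_⟩
  rw [hv, hw, h, Units.val_mul, mul_right_comm, ← mul_assoc, Units.mul_inv, one_mul]

lemma exists_eq_mul_of_cast_eq_zero {n : ℕ} [NeZero n] (u z : ZMod n)
    (h : (z.cast : ZMod (Nat.gcd n u.val)) = 0) : ∃ d, z = u * d := by
  rw [cast_eq_val, natCast_eq_zero_iff] at h
  obtain ⟨k, hk⟩ := h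
  refine ⟨Nat.gcdB n u.val * k, ?_⟩
  rw [← natCast_zmod_val z, hk, Nat.cast_mul, natCast_gcd_val, mul_assoc]

lemma exists_eq_mul_unit_add_mul {n : ℕ} [NeZero n] (u b b' : ZMod n)
    (h : Nat.gcd (Nat.gcd n u.val) b.val = Nat.gcd (Nat.gcd n u.val) b'.val) :
    ∃ (c : (ZMod n)ˣ) (d : ZMod n), b' = b * c + u * d := by
  have hm : Nat.gcd n u.val ∣ n := Nat.gcd_dvd_left _ _
  have : NeZero (Nat.gcd n u.val) := ⟨Nat.gcd_ne_zero_left (NeZero.ne n)⟩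
  obtain ⟨v, hv⟩ := exists_natCast_mul_unit_eq h
  obtain ⟨c, rfl⟩ := unitsMap_surjective hm v
  obtain ⟨d, hd⟩ := exists_eq_mul_of_cast_eq_zero u (b' - b * c) (by
    rw [cast_sub hm, cast_mul hm, ← unitsMap_val hm, cast_eq_val, cast_eq_val b, hv, sub_self])
  exact ⟨c, d, eq_add_of_sub_eq' hd⟩

end ZMod

section Displacement

variable {G : Type*} [Group G]

def displacementSubgroup (φ : G ≃* G) : Subgroup G :=
  Subgroup.closure (Set.range fun x => x⁻¹ * φ x)

lemma displacementSubgroup_of_conj {φ φ' τ : G ≃* G} (h : ∀ x, φ' x = τ (φ (τ.symm x))) :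
    displacementSubgroup φ' = (displacementSubgroup φ).map τ.toMonoidHom := by
  have hcomp : (fun x => x⁻¹ * φ' x) ∘ τ = τ ∘ fun x => x⁻¹ * φ x := by
    funext x
    simp [h]
  rw [displacementSubgroup, displacementSubgroup, MonoidHom.map_closure,
    ← τ.surjective.range_comp, hcomp, Set.range_comp]
  rfl

end Displacement

namespace DihedralGroup

variable {n : ℕ}

lemma exists_map_r_one_eq_r (hn : n ≠ 2) (ψ : DihedralGroup n ≃* DihedralGroup n) :
    ∃ e, ψ (r 1) = r e := by
  rcases h : ψ (r 1) with e | e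
  · exact ⟨e, rfl⟩
  · have horder := ψ.orderOf_eq (r 1)
    rw [h, orderOf_sr, orderOf_r_one] at horder
    exact absurd horder.symm hn

/-- The automorphism `φ_{c,d}`. -/
def affAut (c : (ZMod n)ˣ) (d : ZMod n) : DihedralGroup n ≃* DihedralGroup n where
  toFun
    | r i => r (c * i)
    | sr i => sr (c * i + d)
  invFun
    | r i => r (c⁻¹.val * i)
    | sr i => sr (c⁻¹.val * (i - d))
  left_inv := by rintro (i | i) <;> simp
  right_inv := by rintro (i | i) <;> simp [mul_sub]
  map_mul' := by
    rintro (i | i) (j | j) <;>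
      simp only [r_mul_r, r_mul_sr, sr_mul_r, sr_mul_sr] <;> congr 1 <;> ring

variable {a b : ZMod n} {φ : DihedralGroup n ≃* DihedralGroup n}

lemma conj_affAut {b' : ZMod n} {φ' : DihedralGroup n ≃* DihedralGroup n}
    (hφr : ∀ i, φ (r i) = r (a * i)) (hφs : ∀ i, φ (sr i) = sr (a * i + b))
    (hφ'r : ∀ i, φ' (r i) = r (a * i)) (hφ's : ∀ i, φ' (sr i) = sr (a * i + b'))
    {c : (ZMod n)ˣ} {d : ZMod n} (hb' : b' = b * c + (1 - a) * d) :
    ∀ x, φ' x = affAut c d (φ ((affAut c d).symm x)) := by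
  have hc : (c : ZMod n) * c⁻¹.val = 1 := c.mul_inv
  rintro (i | i)
  · show φ' (r i) = affAut c d (φ (r (c⁻¹.val * i)))
    rw [hφ'r, hφr]
    show r _ = r (c.val * (a * (c⁻¹.val * i)))
    congr 1
    linear_combination (-(a * i)) * hc
  · show φ' (sr i) = affAut c d (φ (sr (c⁻¹.val * (i - d))))
    rw [hφ's, hφs]
    show sr _ = sr (c.val * (a * (c⁻¹.val * (i - d)) + b) + d)
    congr 1
    linear_combination hb' - (a * (i - d)) * hc

variable [NeZero n]

lemma r_mul_mem_zpowers (x k : ZMod n) : r (x * k) ∈ Subgroup.zpowers (r x) := by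
  simpa [r_pow] using pow_mem (Subgroup.mem_zpowers (r x)) k.val

lemma r_mem_zpowers_of_dvd {d : ℕ} {x : ZMod n} (h : d ∣ x.val) :
    r x ∈ Subgroup.zpowers (r (d : ZMod n)) := by
  obtain ⟨k, hk⟩ := h
  rw [← ZMod.natCast_zmod_val x, hk, Nat.cast_mul]
  exact r_mul_mem_zpowers _ _

lemma closure_pair_r_eq_zpowers (x y : ZMod n) :
    Subgroup.closure {r x, r y} =
      Subgroup.zpowers (r (Nat.gcd (Nat.gcd n x.val) y.val : ZMod n)) := by
  apply le_antisymm
  · rw [Subgroup.closure_le]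
    rintro z (rfl | rfl)
    · exact r_mem_zpowers_of_dvd ((Nat.gcd_dvd_left _ _).trans (Nat.gcd_dvd_right _ _))
    · exact r_mem_zpowers_of_dvd (Nat.gcd_dvd_right _ _)
  · have bezout : ((Nat.gcd (Nat.gcd n x.val) y.val : ℕ) : ZMod n) =
        x * (Nat.gcdB n x.val * Nat.gcdA (Nat.gcd n x.val) y.val) +
          y * Nat.gcdB (Nat.gcd n x.val) y.val := by
      have h := congrArg (Int.cast : ℤ → ZMod n) (Nat.gcd_eq_gcd_ab (Nat.gcd n x.val) y.val)
      push_cast [ZMod.natCast_gcd_val, ZMod.natCast_zmod_val] at h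
      rw [h]
      ring
    rw [Subgroup.zpowers_le, bezout, ← r_mul_r]
    exact mul_mem
      (Subgroup.zpowers_le.mpr (Subgroup.subset_closure (by simp)) (r_mul_mem_zpowers _ _))
      (Subgroup.zpowers_le.mpr (Subgroup.subset_closure (by simp)) (r_mul_mem_zpowers _ _))

lemma displacementSubgroup_eq_closure (hφr : ∀ i, φ (r i) = r (a * i))
    (hφs : ∀ i, φ (sr i) = sr (a * i + b)) :
    displacementSubgroup φ = Subgroup.closure {r (1 - a), r b} := by
  have hrot : Subgroup.zpowers (r (1 - a)) ≤ Subgroup.closure {r (1 - a), r b} :=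
    Subgroup.zpowers_le.mpr (Subgroup.subset_closure (by simp))
  apply le_antisymm
  · rw [displacementSubgroup, Subgroup.closure_le]
    rintro _ ⟨i | i, rfl⟩
    · dsimp only
      rw [hφr, inv_r, r_mul_r, show -i + a * i = (1 - a) * -i by ring]
      exact hrot (r_mul_mem_zpowers _ _)
    · dsimp only
      rw [hφs, inv_sr, sr_mul_sr, show a * i + b - i = (1 - a) * -i + b by ring, ← r_mul_r]
      exact mul_mem (hrot (r_mul_mem_zpowers _ _)) (Subgroup.subset_closure (by simp))
  · rw [Subgroup.closure_le]
    rintro _ (rfl | rfl)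
    · refine Subgroup.subset_closure ⟨r (-1), ?_⟩
      simp only [hφr, inv_r, r_mul_r]
      ring_nf
    · refine Subgroup.subset_closure ⟨sr 0, ?_⟩
      simp only [hφs, inv_sr, sr_mul_sr]
      ring_nf

lemma card_displacementSubgroup (hφr : ∀ i, φ (r i) = r (a * i))
    (hφs : ∀ i, φ (sr i) = sr (a * i + b)) :
    Nat.card (displacementSubgroup φ) = n / Nat.gcd (Nat.gcd n (1 - a).val) b.val := by
  rw [displacementSubgroup_eq_closure hφr hφs, closure_pair_r_eq_zpowers, Nat.card_zpowers,
    orderOf_r, ZMod.gcd_val_natCast,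
    Nat.gcd_eq_right ((Nat.gcd_dvd_left _ _).trans (Nat.gcd_dvd_left _ _))]

lemma eq_of_conj_of_ne_two (hn : n ≠ 2) {a' : ZMod n} {φ' τ : DihedralGroup n ≃* DihedralGroup n}
    (hφr : ∀ i, φ (r i) = r (a * i)) (hφ'r : ∀ i, φ' (r i) = r (a' * i))
    (h : ∀ x, φ' x = τ (φ (τ.symm x))) : a = a' := by
  obtain ⟨e, he⟩ := exists_map_r_one_eq_r hn τ.symm
  have hτe : τ (r e) = r 1 := by rw [← he, τ.apply_symm_apply]
  have hr : r a' = r a := calc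
    r a' = φ' (r 1) := by rw [hφ'r, mul_one]
    _ = τ (r e ^ a.val) := by rw [h, he, hφr, r_pow, mul_comm, ZMod.natCast_zmod_val]
    _ = r a := by rw [map_pow, hτe, r_one_pow, ZMod.natCast_zmod_val]
  exact (r.inj hr).symm

end DihedralGroup

/-- Conjugacy criterion for the automorphisms `φ_{a,b}` of the dihedral group `D_n`
(where `φ_{a,b}(τ^ε σ^i) = τ^ε σ^{a i + ε b}`): `φ_{a,b}` and `φ_{a',b'}` are conjugate
in `Aut(D_n)` iff `a = a'` in `ℤ/nℤ` and `gcd(n, 1−a, b) = gcd(n, 1−a', b')`. -/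
theorem dihedral_auto_conjugate_iff {n : ℕ} [NeZero n]
    (a a' b b' : ZMod n) (ha : IsUnit a) (ha' : IsUnit a')
    (φ φ' : DihedralGroup n ≃* DihedralGroup n)
    (hφr : ∀ i : ZMod n, φ (r i) = r (a * i))
    (hφs : ∀ i : ZMod n, φ (sr i) = sr (a * i + b))
    (hφ'r : ∀ i : ZMod n, φ' (r i) = r (a' * i))
    (hφ's : ∀ i : ZMod n, φ' (sr i) = sr (a' * i + b')) :
    (∃ τ : DihedralGroup n ≃* DihedralGroup n, ∀ x, φ' x = τ (φ (τ.symm x))) ↔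
    (a = a' ∧ Nat.gcd (Nat.gcd n (1 - a).val) b.val
            = Nat.gcd (Nat.gcd n (1 - a').val) b'.val) := by
  constructor
  · rintro ⟨τ, hτ⟩
    have ha_eq : a = a' := by
      rcases eq_or_ne n 2 with rfl | hn
      · simpa using congrArg Units.val (Subsingleton.elim ha.unit ha'.unit)
      · exact eq_of_conj_of_ne_two hn hφr hφ'r hτ
    refine ⟨ha_eq, ?_⟩
    have hcard : Nat.card (displacementSubgroup φ') = Nat.card (displacementSubgroup φ) := by
      rw [displacementSubgroup_of_conj hτ, Subgroup.card_map_of_injective τ.injective]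
    rw [card_displacementSubgroup hφr hφs, card_displacementSubgroup hφ'r hφ's] at hcard
    exact ((Nat.div_eq_iff_eq_of_dvd_dvd (NeZero.ne n)
      ((Nat.gcd_dvd_left _ _).trans (Nat.gcd_dvd_left _ _))
      ((Nat.gcd_dvd_left _ _).trans (Nat.gcd_dvd_left _ _))).mp hcard).symm
  · rintro ⟨rfl, hgcd⟩
    obtain ⟨c, d, hb'⟩ := ZMod.exists_eq_mul_unit_add_mul (1 - a) b b' hgcd
    exact ⟨affAut c d, conj_affAut hφr hφs hφ'r hφ's hb'⟩
end

section
/- Let D_n be the dihedral group of order 2n and φ_{a,b} ∈ Aut(D_n) defined by φ_{a,b}(τ^ε σ^i) = τ^ε σ^{ai+εb}, where gcd(a,n)=1. Let g = gcd(n, 1−a) and d = gcd(g, b). Then the number of fixed points of φ_{a,b} in D_n is 2g if d = g, and g if d ≠ g. -/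
open DihedralGroup

lemma zmod_solvable_iff {n : ℕ} [NeZero n] (c b : ZMod n) :
    (∃ x : ZMod n, c * x = b) ↔ Nat.gcd n c.val ∣ b.val := by
  constructor
  · rintro ⟨x, hx⟩
    have hmod : ((c.val * x.val : ℕ) : ZMod n) = ((b.val : ℕ) : ZMod n) := by
      push_cast
      simp only [ZMod.natCast_val, ZMod.cast_id]
      exact hx
    have hMe : Nat.ModEq n (c.val * x.val) b.val :=
      (ZMod.natCast_eq_natCast_iff _ _ _).mp hmod
    have hdvd : (n : ℤ) ∣ (b.val : ℤ) - (c.val * x.val : ℕ) := hMe.dvd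
    have h1 : ((Nat.gcd n c.val : ℕ) : ℤ) ∣ (b.val : ℤ) := by
      have hgn : ((Nat.gcd n c.val : ℕ) : ℤ) ∣ (n : ℤ) := Int.natCast_dvd_natCast.mpr (Nat.gcd_dvd_left _ _)
      have hgc : ((Nat.gcd n c.val : ℕ) : ℤ) ∣ (c.val : ℤ) := Int.natCast_dvd_natCast.mpr (Nat.gcd_dvd_right _ _)
      have heq : ((b.val : ℤ)) = ((b.val : ℤ) - (c.val * x.val : ℕ)) + (c.val * x.val : ℕ) := by ring
      rw [heq]
      exact dvd_add (dvd_trans hgn hdvd) (by push_cast; exact Dvd.dvd.mul_right hgc _)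
    exact_mod_cast h1
  · intro hd
    set g := Nat.gcd n c.val with hg
    refine ⟨(Nat.gcdB n c.val : ZMod n) * (b.val / g : ℕ), ?_⟩
    have hbezout : (g : ℤ) = n * Nat.gcdA n c.val + c.val * Nat.gcdB n c.val :=
      Nat.gcd_eq_gcd_ab n c.val
    have hgz : ((g : ℤ) : ZMod n) = c * (Nat.gcdB n c.val : ZMod n) := by
      rw [hbezout]
      push_cast
      simp [ZMod.natCast_self, ZMod.natCast_val, ZMod.cast_id]
    have hb : ((g * (b.val / g) : ℕ) : ZMod n) = b := by
      rw [Nat.mul_div_cancel' hd]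
      simp [ZMod.natCast_val, ZMod.cast_id]
    calc c * ((Nat.gcdB n c.val : ZMod n) * (b.val / g : ℕ))
        = (c * (Nat.gcdB n c.val : ZMod n)) * (b.val / g : ℕ) := by ring
      _ = ((g : ℤ) : ZMod n) * (b.val / g : ℕ) := by rw [hgz]
      _ = ((g * (b.val / g) : ℕ) : ZMod n) := by push_cast; ring
      _ = b := hb

lemma zmod_card_mul_eq {n : ℕ} [NeZero n] (c b : ZMod n) :
    Nat.card {i : ZMod n | c * i = b} =
      if Nat.gcd n c.val ∣ b.val then Nat.gcd n c.val else 0 := by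
  set g := Nat.gcd n c.val with hg
  set f : ZMod n →+ ZMod n := AddMonoidHom.mulLeft c with hf
  have hfapp : ∀ x, f x = c * x := fun x => rfl
  -- the range of f is the cyclic subgroup generated by c
  have hrange : f.range = AddSubgroup.zmultiples c := by
    ext x
    simp only [AddMonoidHom.mem_range, AddSubgroup.mem_zmultiples_iff]
    constructor
    · rintro ⟨y, hy⟩
      refine ⟨(y.val : ℤ), ?_⟩
      rw [zsmul_eq_mul]
      push_cast
      simp only [ZMod.natCast_val, ZMod.cast_id]
      rw [mul_comm]
      exact hy
    · rintro ⟨k, hk⟩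
      refine ⟨(k : ZMod n), ?_⟩
      rw [hfapp, mul_comm, ← zsmul_eq_mul] at *
      exact_mod_cast hk
  have hn0 : n ≠ 0 := NeZero.ne n
  have hcardrange : Nat.card f.range = n / g := by
    rw [hrange, Nat.card_zmultiples]
    conv_lhs => rw [show c = ((c.val : ℕ) : ZMod n) by simp [ZMod.natCast_val, ZMod.cast_id]]
    exact ZMod.addOrderOf_coe c.val hn0
  have hker : Nat.card f.ker = g := by
    have h1 : Nat.card (ZMod n) = Nat.card (ZMod n ⧸ f.ker) * Nat.card f.ker :=
      AddSubgroup.card_eq_card_quotient_mul_card_addSubgroup f.ker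
    have h2 : Nat.card (ZMod n ⧸ f.ker) = Nat.card f.range :=
      Nat.card_congr (QuotientAddGroup.quotientKerEquivRange f).toEquiv
    rw [Nat.card_zmod, h2, hcardrange] at h1
    have hgdvd : g ∣ n := Nat.gcd_dvd_left _ _
    have hngpos : 0 < n / g :=
      Nat.div_pos (Nat.le_of_dvd (Nat.pos_of_ne_zero hn0) hgdvd)
        (Nat.gcd_pos_of_pos_left c.val (Nat.pos_of_ne_zero hn0))
    have h4 : n / (n / g) = Nat.card f.ker :=
      Nat.div_eq_of_eq_mul_right hngpos h1
    rw [← h4, Nat.div_div_self hgdvd hn0]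
  by_cases hsol : ∃ x : ZMod n, c * x = b
  · obtain ⟨x0, hx0⟩ := hsol
    rw [if_pos ((zmod_solvable_iff c b).mp ⟨x0, hx0⟩)]
    rw [← hker]
    apply Nat.card_congr
    refine Equiv.subtypeEquiv (Equiv.subRight x0) (fun i => ?_)
    simp only [Set.mem_setOf_eq, Equiv.subRight_apply, SetLike.mem_coe]
    rw [AddMonoidHom.mem_ker, hfapp, mul_sub, hx0, sub_eq_zero]
  · rw [if_neg (fun h => hsol ((zmod_solvable_iff c b).mpr h))]
    have : {i : ZMod n | c * i = b} = ∅ := by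
      ext i
      simp only [Set.mem_setOf_eq, Set.mem_empty_iff_false, iff_false]
      exact fun h => hsol ⟨i, h⟩
    rw [this]
    simp

/-- The number of fixed points of the automorphism `φ_{a,b}` of `D_n`
(`φ_{a,b}(τ^ε σ^i) = τ^ε σ^{a i + ε b}`) is `2g` if `d = g` and `g` otherwise, where
`g = gcd(n, 1−a)` and `d = gcd(g, b)`. -/
theorem dihedral_auto_card_fixedPoints {n : ℕ} [NeZero n]
    (a b : ZMod n) (ha : IsUnit a)
    (φ : DihedralGroup n ≃* DihedralGroup n)
    (hφr : ∀ i : ZMod n, φ (r i) = r (a * i))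
    (hφs : ∀ i : ZMod n, φ (sr i) = sr (a * i + b)) :
    Nat.card {x : DihedralGroup n | φ x = x} =
      if Nat.gcd (Nat.gcd n (1 - a).val) b.val = Nat.gcd n (1 - a).val
      then 2 * Nat.gcd n (1 - a).val
      else Nat.gcd n (1 - a).val := by
  set c : ZMod n := 1 - a with hc
  have hriff : ∀ i : ZMod n, (φ (r i) = r i) ↔ c * i = 0 := by
    intro i
    rw [hφr i]
    constructor
    · intro h
      have : a * i = i := r.inj h
      rw [hc, sub_mul, one_mul, this, sub_self]
    · intro h
      have : i - a * i = 0 := by rw [← h, hc, sub_mul, one_mul]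
      have : a * i = i := (sub_eq_zero.mp this).symm
      rw [this]
  have hsiff : ∀ i : ZMod n, (φ (sr i) = sr i) ↔ c * i = b := by
    intro i
    rw [hφs i]
    constructor
    · intro h
      have h2 : a * i + b = i := sr.inj h
      rw [hc]
      linear_combination -h2
    · intro h
      have hib : i - a * i = b := by rw [← h, hc, sub_mul, one_mul]
      have h3 : a * i + b = i := by linear_combination -hib
      rw [h3]
  have key : Nat.card {x : DihedralGroup n | φ x = x} =
      Nat.card {i : ZMod n | c * i = 0} + Nat.card {i : ZMod n | c * i = b} := by
    rw [← Nat.card_sum]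
    apply Nat.card_congr
    exact {
      toFun := fun x => match x with
        | ⟨DihedralGroup.r i, hi⟩ => Sum.inl ⟨i, (hriff i).mp hi⟩
        | ⟨DihedralGroup.sr i, hi⟩ => Sum.inr ⟨i, (hsiff i).mp hi⟩
      invFun := fun x => match x with
        | Sum.inl ⟨i, hi⟩ => ⟨r i, (hriff i).mpr hi⟩
        | Sum.inr ⟨i, hi⟩ => ⟨sr i, (hsiff i).mpr hi⟩
      left_inv := fun x => by rcases x with ⟨x | x, hx⟩ <;> rfl
      right_inv := fun x => by rcases x with ⟨i, hi⟩ | ⟨i, hi⟩ <;> rfl }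
  rw [key, zmod_card_mul_eq, zmod_card_mul_eq]
  set g := Nat.gcd n c.val with hg
  have hgb : Nat.gcd g b.val = g ↔ g ∣ b.val :=
    ⟨fun h => h ▸ Nat.gcd_dvd_right g b.val, Nat.gcd_eq_left⟩
  rw [if_pos (by simp : g ∣ (0 : ZMod n).val)]
  by_cases hd : g ∣ b.val
  · rw [if_pos hd, if_pos (hgb.mpr hd)]
    ring
  · rw [if_neg hd, if_neg (fun h => hd (hgb.mp h))]
    omega
end

section
/- Let D_n be the dihedral group of order 2n, a coprime to n, b ∈ Z/nZ, and φ_{a,b} the automorphism with φ_{a,b}(τ^ε σ^i) = τ^ε σ^{ai+εb}. Let d = gcd(n, 1−a, b). Then the subgroup of D_n generated by {x·φ_{a,b}(x)⁻¹ : x ∈ D_n} equals the cyclic subgroup ⟨σ^d⟩. -/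
/-!
The rotation indices `{z | r z ∈ H}` of a subgroup `H` of `D_n` form an ideal of `ZMod n`.
The elements `x * φ(x)⁻¹` are the rotations `r ((1 - a) i)` and `r (b - (1 - a) i)`, and
`r (1 - a)`, `r b` are among them, so both subgroups in question consist of rotations and
have the same rotation ideal `(1 - a, b) = (d)`.
-/

theorem Ideal.span_natCast_gcd {R : Type*} [Ring R] (m k : ℕ) :
    Ideal.span {((m.gcd k : ℕ) : R)} = Ideal.span {(m : R), (k : R)} := by
  have := congrArg (Ideal.map (Int.castRingHom R)) (span_gcd (m : ℤ) (k : ℤ))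
  simpa [Ideal.map_span, Set.image_insert_eq, ← Int.coe_gcd] using this

theorem ZMod.span_natCast_gcd_gcd_val {n : ℕ} [NeZero n] (x y : ZMod n) :
    Ideal.span {((Nat.gcd (Nat.gcd n x.val) y.val : ℕ) : ZMod n)} = Ideal.span {x, y} := by
  rw [Ideal.span_natCast_gcd, Ideal.span_insert, Ideal.span_natCast_gcd, ZMod.natCast_self,
    Ideal.span_insert_zero, ZMod.natCast_zmod_val, ZMod.natCast_zmod_val, ← Ideal.span_insert]

namespace DihedralGroup

variable {n : ℕ}

theorem r_mul_inv_r (i j : ZMod n) : r i * (r j)⁻¹ = r (i - j) := by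
  rw [inv_r, r_mul_r, sub_eq_add_neg]

theorem sr_mul_inv_sr (i j : ZMod n) : sr i * (sr j)⁻¹ = r (j - i) := by
  rw [inv_sr, sr_mul_sr]

def rotationIdeal (H : Subgroup (DihedralGroup n)) : Ideal (ZMod n) where
  carrier := {z | r z ∈ H}
  add_mem' hx hy := by
    simpa only [Set.mem_ofPred_eq, ← r_mul_r] using H.mul_mem hx hy
  zero_mem' := by simpa only [Set.mem_ofPred_eq, r_zero] using H.one_mem
  smul_mem' c z hz := by
    simpa only [Set.mem_ofPred_eq, r_zpow, ZMod.intCast_zmod_cast, smul_eq_mul, mul_comm z]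
      using H.zpow_mem hz (c.cast : ℤ)

@[simp]
theorem mem_rotationIdeal {H : Subgroup (DihedralGroup n)} {z : ZMod n} :
    z ∈ rotationIdeal H ↔ r z ∈ H :=
  Iff.rfl

end DihedralGroup

open DihedralGroup

theorem dihedral_orbit_subgroup_eq_zpowers_general {n : ℕ} [NeZero n]
    (a b : ZMod n)
    (φ : DihedralGroup n ≃* DihedralGroup n)
    (hφr : ∀ i : ZMod n, φ (r i) = r (a * i))
    (hφs : ∀ i : ZMod n, φ (sr i) = sr (a * i + b)) :
    Subgroup.closure {g : DihedralGroup n | ∃ x : DihedralGroup n, g = x * (φ x)⁻¹} =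
      Subgroup.zpowers (r ((Nat.gcd (Nat.gcd n (1 - a).val) b.val : ℕ) : ZMod n)) := by
  set H := Subgroup.closure {g : DihedralGroup n | ∃ x : DihedralGroup n, g = x * (φ x)⁻¹}
  set d : ZMod n := ((Nat.gcd (Nat.gcd n (1 - a).val) b.val : ℕ) : ZMod n)
  have hspan : Ideal.span {d} = Ideal.span {1 - a, b} := ZMod.span_natCast_gcd_gcd_val (1 - a) b
  have hr (i : ZMod n) : r i * (φ (r i))⁻¹ = r ((1 - a) * i) := by
    rw [hφr, r_mul_inv_r]; ring_nf
  have hsr (i : ZMod n) : sr i * (φ (sr i))⁻¹ = r (b - (1 - a) * i) := by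
    rw [hφs, sr_mul_inv_sr]; ring_nf
  apply le_antisymm
  · have hd : Ideal.span {1 - a, b} ≤ rotationIdeal (Subgroup.zpowers (r d)) := by
      rw [← hspan, Ideal.span_singleton_le_iff_mem]
      exact Subgroup.mem_zpowers _
    have h₁ : 1 - a ∈ Ideal.span {1 - a, b} := Ideal.subset_span (by simp)
    have h₂ : b ∈ Ideal.span {1 - a, b} := Ideal.subset_span (by simp)
    rw [Subgroup.closure_le]
    rintro _ ⟨x | i, rfl⟩
    · exact hr x ▸ hd (Ideal.mul_mem_right _ _ h₁)
    · exact hsr i ▸ hd (sub_mem h₂ (Ideal.mul_mem_right _ _ h₁))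
  · have hH : Ideal.span {1 - a, b} ≤ rotationIdeal H := by
      rw [Ideal.span_le, Set.insert_subset_iff, Set.singleton_subset_iff]
      refine ⟨Subgroup.subset_closure ⟨r 1, ?_⟩, Subgroup.subset_closure ⟨sr 0, ?_⟩⟩
      · rw [hr, mul_one]
      · rw [hsr, mul_zero, sub_zero]
    rw [Subgroup.zpowers_le, ← mem_rotationIdeal, ← Ideal.span_singleton_le_iff_mem, hspan]
    exact hH

/-- For the automorphism `φ_{a,b}` of `D_n` (`φ_{a,b}(τ^ε σ^i) = τ^ε σ^{a i + ε b}`), the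
subgroup generated by `{x * φ_{a,b}(x)⁻¹ : x ∈ D_n}` is the cyclic subgroup `⟨σ^d⟩`,
where `d = gcd(n, 1−a, b)`. -/
theorem dihedral_orbit_subgroup_eq_zpowers {n : ℕ} [NeZero n]
    (a b : ZMod n) (ha : IsUnit a)
    (φ : DihedralGroup n ≃* DihedralGroup n)
    (hφr : ∀ i : ZMod n, φ (r i) = r (a * i))
    (hφs : ∀ i : ZMod n, φ (sr i) = sr (a * i + b)) :
    Subgroup.closure {g : DihedralGroup n | ∃ x : DihedralGroup n, g = x * (φ x)⁻¹} =
      Subgroup.zpowers (r ((Nat.gcd (Nat.gcd n (1 - a).val) b.val : ℕ) : ZMod n)) :=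
  dihedral_orbit_subgroup_eq_zpowers_general a b φ hφr hφs
end

section
/- Let G and G' be finite abelian groups, ψ ∈ Aut(G), ψ' ∈ Aut(G'), ρ = id_G − ψ and ρ' = id_{G'} − ψ' (as endomorphisms, x ↦ x − ψ(x)). Then the generalized Alexander quandles Q(G,ψ) and Q(G',ψ') are isomorphic as quandles if and only if |G| = |G'| and there exists a group isomorphism h : Im ρ → Im ρ' with h ∘ ψ|_{Im ρ} = ψ'|_{Im ρ'} ∘ h. -/
/-!
A quandle isomorphism `f` may be normalised to `f 0 = 0`; it then intertwines `ψ` with `ψ'` and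
`ρ` with `ρ'`, and satisfies `f (z + ρ x) = f z + ρ' (f x)`, so it restricts to the required
isomorphism `Im ρ ≃ Im ρ'`.

Conversely, given such an `h`, any bijection `f` with `f (x + r) = f x + h r` for `r ∈ Im ρ` and
`ρ' ∘ f = h ∘ ρ` is a quandle isomorphism. Such an `f` is determined by its values `w p` on coset
representatives of `Im ρ`, subject to `ρ' (w p) = h (ρ p)` and to `p ↦ w p + Im ρ'` being a
bijection `G ⧸ Im ρ → G' ⧸ Im ρ'`. Both `h ∘ ρ` and `ρ'` induce homomorphisms into
`G' ⧸ ρ' (Im ρ')` with the same image, and the orders of `G ⧸ Im ρ` and `G' ⧸ Im ρ'` agree, so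
their fibres have equal size and can be matched up.
-/

open Function QuotientAddGroup

section CompatibleEquiv

variable {A B C : Type*} [AddGroup A] [AddGroup B] [AddGroup C]

theorem AddMonoidHom.exists_equiv_comp_eq_of_range_eq (s : A →+ C) (t : B →+ C)
    (hrange : s.range = t.range) (hker : Nonempty (s.ker ≃ t.ker)) :
    ∃ β : A ≃ B, ∀ a, t (β a) = s a := by
  obtain ⟨k⟩ := hker
  have fiber (c : C) : Nonempty (s ⁻¹' {c} ≃ t ⁻¹' {c}) := by
    by_cases hc : c ∈ s.range
    · obtain ⟨a, rfl⟩ := hc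
      obtain ⟨b, hb⟩ : s a ∈ t.range := hrange ▸ ⟨a, rfl⟩
      exact ⟨(((s.fiberEquivKer a).trans k).trans (t.fiberEquivKer b).symm).trans
        (Equiv.setCongr (by rw [hb]))⟩
    · have hs : IsEmpty (s ⁻¹' {c}) := ⟨fun a => hc ⟨a, a.2⟩⟩
      have ht : IsEmpty (t ⁻¹' {c}) := ⟨fun b => hc (hrange ▸ ⟨b, b.2⟩)⟩
      exact ⟨Equiv.equivOfIsEmpty _ _⟩
  exact ⟨Equiv.ofPreimageEquiv fun c => (fiber c).some, Equiv.ofPreimageEquiv_map _⟩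

theorem AddMonoidHom.nonempty_ker_equiv_of_range_eq [Finite A] [Finite B] (s : A →+ C)
    (t : B →+ C) (hrange : s.range = t.range) (hcard : Nat.card A = Nat.card B) :
    Nonempty (s.ker ≃ t.ker) := by
  rw [← Finite.card_eq]
  have : Finite t.range := Finite.of_surjective _ t.rangeRestrict_surjective
  have hs := s.ker.card_mul_index
  have ht := t.ker.card_mul_index
  rw [AddSubgroup.index_ker, hrange] at hs
  rw [AddSubgroup.index_ker] at ht
  exact Nat.eq_of_mul_eq_mul_right Nat.card_pos (hs.trans (hcard.trans ht.symm))

end CompatibleEquiv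

theorem QuotientAddGroup.exists_mk_eq_of_mk_map_eq {B C : Type*} [AddGroup B] [AddGroup C]
    (φ : B →+ C) (S : AddSubgroup B) {y : B} {c : C}
    (h : (φ y : C ⧸ S.map φ) = c) : ∃ w : B, (w : B ⧸ S) = y ∧ φ w = c := by
  obtain ⟨z, hz, hφz⟩ := QuotientAddGroup.eq.mp h
  refine ⟨y + z, QuotientAddGroup.mk_add_of_mem y hz, ?_⟩
  rw [map_add, hφz, add_neg_cancel_left]

theorem AddSubgroup.index_eq_of_addEquiv {A B : Type*} [AddGroup A] [AddGroup B] [Finite B]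
    {R : AddSubgroup A} {R' : AddSubgroup B} (e : R ≃+ R') (hcard : Nat.card A = Nat.card B) :
    R.index = R'.index := by
  have hR := R.card_mul_index
  have hR' := R'.card_mul_index
  rw [Nat.card_congr e.toEquiv, hcard] at hR
  exact Nat.eq_of_mul_eq_mul_left Nat.card_pos (hR.trans hR'.symm)

noncomputable def AddSubgroup.addEquivOfBijOn {A B : Type*} [AddGroup A] [AddGroup B]
    {R : AddSubgroup A} {R' : AddSubgroup B} (h : A → B) (hbij : Set.BijOn h R R')
    (hadd : ∀ x ∈ R, ∀ y ∈ R, h (x + y) = h x + h y) : R ≃+ R' :=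
  { hbij.equiv h with map_add' := fun x y => Subtype.ext (hadd x x.2 y y.2) }

section ExtendAlongCosets

variable {A B : Type*} [AddGroup A] [AddGroup B] {R : AddSubgroup A} {R' : AddSubgroup B}

theorem QuotientAddGroup.neg_out_add_mem (x : A) : -(x : A ⧸ R).out + x ∈ R :=
  QuotientAddGroup.eq.mp (QuotientAddGroup.out_eq' _)

noncomputable def extendAlongCosets (e : R ≃+ R') (w : A ⧸ R → B) (x : A) : B :=
  w x + e ⟨_, QuotientAddGroup.neg_out_add_mem x⟩

variable (e : R ≃+ R') (w : A ⧸ R → B)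

theorem extendAlongCosets_add_of_mem (x : A) {r : A} (hr : r ∈ R) :
    extendAlongCosets e w (x + r) = extendAlongCosets e w x + e ⟨r, hr⟩ := by
  have hx : ((x + r : A) : A ⧸ R) = x := QuotientAddGroup.mk_add_of_mem x hr
  have hsplit : (⟨_, neg_out_add_mem (x + r)⟩ : R) = ⟨_, neg_out_add_mem x⟩ + ⟨r, hr⟩ :=
    Subtype.ext (by simp only [hx, AddMemClass.mk_add_mk, add_assoc])
  unfold extendAlongCosets
  rw [hsplit, map_add, AddSubgroup.coe_add, hx, add_assoc]

theorem extendAlongCosets_out (p : A ⧸ R) : extendAlongCosets e w p.out = w p := by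
  simp [extendAlongCosets]

theorem mk_extendAlongCosets (x : A) :
    ((extendAlongCosets e w x : B) : B ⧸ R') = (w (x : A ⧸ R) : B ⧸ R') :=
  QuotientAddGroup.mk_add_of_mem _ (e _).2

theorem bijective_extendAlongCosets (hw : Bijective fun p => (w p : B ⧸ R')) :
    Bijective (extendAlongCosets e w) := by
  constructor
  · intro x y hxy
    have hmk : (x : A ⧸ R) = y :=
      hw.1 (by simpa only [mk_extendAlongCosets] using congrArg ((↑) : B → B ⧸ R') hxy)
    have hr := QuotientAddGroup.eq.mp hmk
    rw [← add_neg_cancel_left x y, extendAlongCosets_add_of_mem e w x hr,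
      left_eq_add, ZeroMemClass.coe_eq_zero, AddEquivClass.map_eq_zero_iff] at hxy
    exact neg_add_eq_zero.mp (congrArg Subtype.val hxy)
  · intro b
    obtain ⟨p, hp⟩ := hw.2 b
    obtain ⟨r, hr⟩ := e.surjective ⟨_, QuotientAddGroup.eq.mp hp⟩
    refine ⟨p.out + r, ?_⟩
    rw [extendAlongCosets_add_of_mem e w _ r.2, extendAlongCosets_out, hr, add_neg_cancel_left]

end ExtendAlongCosets

namespace AlexanderQuandle

variable {G G' : Type*} [AddCommGroup G] [AddCommGroup G']

section Rho

variable (ψ : G ≃+ G) (ψ' : G' ≃+ G')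

def rho : G →+ G := AddMonoidHom.id G - ψ.toAddMonoidHom

@[simp]
theorem rho_apply (x : G) : rho ψ x = x - ψ x := rfl

theorem psi_mem_range_rho {x : G} (hx : x ∈ (rho ψ).range) : ψ x ∈ (rho ψ).range := by
  obtain ⟨a, rfl⟩ := hx
  exact ⟨ψ a, by simp⟩

def IsQuandleHom (f : G → G') : Prop :=
  ∀ x y, f (x + ψ (y - x)) = f x + ψ' (f y - f x)

end Rho

variable {ψ : G ≃+ G} {ψ' : G' ≃+ G'}

namespace IsQuandleHom

variable {f : G → G'} (hf : IsQuandleHom ψ ψ' f)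
include hf

theorem sub_const (c : G') : IsQuandleHom ψ ψ' fun x => f x - c := by
  intro x y
  simp only [hf x y, sub_sub_sub_cancel_right]
  abel

variable (h0 : f 0 = 0)
include h0

theorem map_psi (y : G) : f (ψ y) = ψ' (f y) := by
  simpa [h0] using hf 0 y

theorem map_add_rho (z x : G) : f (z + rho ψ x) = f z + rho ψ' (f x) := by
  have h := hf x (ψ.symm z)
  rw [map_sub, ψ.apply_symm_apply, map_sub, ← hf.map_psi h0, ψ.apply_symm_apply] at h
  rw [rho_apply, rho_apply, show z + (x - ψ x) = x + (z - ψ x) by abel, h]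
  abel

theorem map_rho (x : G) : f (rho ψ x) = rho ψ' (f x) := by
  simpa [h0] using hf.map_add_rho h0 0 x

theorem bijOn_range_rho (hbij : Bijective f) :
    Set.BijOn f (Set.range (rho ψ)) (Set.range (rho ψ')) := by
  refine ⟨?_, hbij.injective.injOn, ?_⟩
  · rintro _ ⟨a, rfl⟩
    exact ⟨f a, (hf.map_rho h0 a).symm⟩
  · rintro _ ⟨b, rfl⟩
    obtain ⟨a, rfl⟩ := hbij.surjective b
    exact ⟨rho ψ a, ⟨a, rfl⟩, hf.map_rho h0 a⟩

end IsQuandleHom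

variable (e : (rho ψ).range ≃+ (rho ψ').range)

theorem isQuandleHom_of_map_add_mem {f : G → G'}
    (hadd : ∀ x r (hr : r ∈ (rho ψ).range), f (x + r) = f x + e ⟨r, hr⟩)
    (hrho : ∀ x, rho ψ' (f x) = e ((rho ψ).rangeRestrict x)) : IsQuandleHom ψ ψ' f := by
  have hpsi (y : G) : f (ψ y) = ψ' (f y) := by
    have h := hadd y (rho ψ (-y)) ⟨-y, rfl⟩
    rw [show y + rho ψ (-y) = ψ y by simp, show (⟨rho ψ (-y), _⟩ : (rho ψ).range)
      = (rho ψ).rangeRestrict (-y) from rfl, map_neg, map_neg, AddSubgroup.coe_neg,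
      ← hrho, rho_apply] at h
    rw [h]
    abel
  intro x y
  rw [show x + ψ (y - x) = ψ y + rho ψ x by simp; abel, hadd _ _ ⟨x, rfl⟩, hpsi]
  rw [show (⟨rho ψ x, _⟩ : (rho ψ).range) = (rho ψ).rangeRestrict x from rfl, ← hrho,
    rho_apply, map_sub]
  abel

variable (he : ∀ r : (rho ψ).range, (e ⟨ψ r, psi_mem_range_rho ψ r.2⟩ : G') = ψ' (e r))
include he

theorem coe_equiv_rangeRestrict_rho (r : (rho ψ).range) :
    (e ((rho ψ).rangeRestrict r) : G') = rho ψ' (e r) := by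
  have hsplit : (rho ψ).rangeRestrict r = r - ⟨ψ r, psi_mem_range_rho ψ r.2⟩ := rfl
  rw [hsplit, map_sub, AddSubgroup.coe_sub, he, rho_apply]

theorem rho_extendAlongCosets {w : G ⧸ (rho ψ).range → G'}
    (hw : ∀ p, rho ψ' (w p) = e ((rho ψ).rangeRestrict p.out)) (x : G) :
    rho ψ' (extendAlongCosets e w x) = e ((rho ψ).rangeRestrict x) := by
  have key (p : G ⧸ (rho ψ).range) (r : (rho ψ).range) :
      rho ψ' (extendAlongCosets e w (p.out + r)) = e ((rho ψ).rangeRestrict (p.out + r)) := by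
    rw [extendAlongCosets_add_of_mem e w _ r.2, extendAlongCosets_out, map_add, hw,
      ← coe_equiv_rangeRestrict_rho e he, map_add, map_add, AddSubgroup.coe_add]
  simpa using key x ⟨_, neg_out_add_mem x⟩

theorem exists_bijective_coset_values [Finite G] [Finite G']
    (hcard : Nat.card G = Nat.card G') :
    ∃ w : G ⧸ (rho ψ).range → G', Bijective (fun p => (w p : G' ⧸ (rho ψ').range)) ∧
      ∀ p, rho ψ' (w p) = e ((rho ψ).rangeRestrict p.out) := by
  let σ : G →+ G' := (rho ψ').range.subtype.comp (e.toAddMonoidHom.comp (rho ψ).rangeRestrict)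
  let T := (rho ψ').range.map (rho ψ')
  have hRT : (rho ψ).range ≤ T.comap σ := by
    rintro _ ⟨a, rfl⟩
    exact ⟨_, (e _).2, (coe_equiv_rangeRestrict_rho e he ((rho ψ).rangeRestrict a)).symm⟩
  let s := QuotientAddGroup.map _ T σ hRT
  let t := QuotientAddGroup.map _ T (rho ψ') (AddSubgroup.le_comap_map _ _)
  have hrange : s.range = t.range := by
    ext c
    constructor
    · rintro ⟨p, rfl⟩
      induction p using QuotientAddGroup.induction_on with | H x => ?_
      obtain ⟨y, hy⟩ := (e ((rho ψ).rangeRestrict x)).2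
      exact ⟨y, by simp [s, t, σ, hy]⟩
    · rintro ⟨q, rfl⟩
      induction q using QuotientAddGroup.induction_on with | H y => ?_
      obtain ⟨x, hx⟩ := (rho ψ).rangeRestrict_surjective (e.symm ((rho ψ').rangeRestrict y))
      exact ⟨x, by simp [s, t, σ, hx]⟩
  obtain ⟨β, hβ⟩ := s.exists_equiv_comp_eq_of_range_eq t hrange
    (s.nonempty_ker_equiv_of_range_eq t hrange (AddSubgroup.index_eq_of_addEquiv e hcard))
  have hw (p : G ⧸ (rho ψ).range) :
      ∃ w : G', (w : G' ⧸ (rho ψ').range) = β p ∧ rho ψ' w = σ p.out := by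
    have h : t ((β p).out : G' ⧸ (rho ψ').range) = s (p.out : G ⧸ (rho ψ).range) := by
      rw [QuotientAddGroup.out_eq', QuotientAddGroup.out_eq', hβ]
    obtain ⟨w, hwβ, hwρ⟩ := QuotientAddGroup.exists_mk_eq_of_mk_map_eq (rho ψ') _ h
    exact ⟨w, hwβ.trans (QuotientAddGroup.out_eq' _), hwρ⟩
  choose w hwβ hwρ using hw
  refine ⟨w, ?_, hwρ⟩
  simpa only [hwβ] using β.bijective

end AlexanderQuandle

open AlexanderQuandle

/-- Nelson's theorem: for finite abelian groups `G, G'` with automorphisms `ψ, ψ'`, and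
`ρ = id − ψ`, `ρ' = id − ψ'`, the Alexander quandles `Q(G, ψ)` and `Q(G', ψ')`
(with `s_x(y) = x + ψ(y − x)`) are isomorphic as quandles iff `|G| = |G'|` and there is a
group isomorphism `h : Im ρ → Im ρ'` with `h ∘ ψ|_{Im ρ} = ψ'|_{Im ρ'} ∘ h`. -/
theorem alexander_quandle_iso_iff {G G' : Type*} [AddCommGroup G] [AddCommGroup G']
    [Finite G] [Finite G'] (ψ : G ≃+ G) (ψ' : G' ≃+ G') :
    (∃ f : G → G', Function.Bijective f ∧
      ∀ x y : G, f (x + ψ (y - x)) = f x + ψ' (f y - f x)) ↔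
    (Nat.card G = Nat.card G' ∧
      ∃ h : G → G',
        Set.BijOn h (Set.range (fun x : G => x - ψ x))
          (Set.range (fun x : G' => x - ψ' x)) ∧
        (∀ x ∈ Set.range (fun x : G => x - ψ x),
          ∀ y ∈ Set.range (fun x : G => x - ψ x), h (x + y) = h x + h y) ∧
        (∀ x ∈ Set.range (fun x : G => x - ψ x), h (ψ x) = ψ' (h x))) := by
  constructor
  · rintro ⟨f, hbij, hf⟩
    have hg : IsQuandleHom ψ ψ' fun x => f x - f 0 := IsQuandleHom.sub_const hf (f 0)
    have hg0 : f 0 - f 0 = 0 := sub_self _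
    have hgbij : Bijective fun x => f x - f 0 := (Equiv.subRight (f 0)).bijective.comp hbij
    refine ⟨Nat.card_eq_of_bijective f hbij, _, hg.bijOn_range_rho hg0 hgbij, ?_,
      fun x _ => hg.map_psi hg0 x⟩
    rintro x - _ ⟨y, rfl⟩
    exact (hg.map_add_rho hg0 x y).trans (congrArg _ (hg.map_rho hg0 y).symm)
  · rintro ⟨hcard, h, hbij, hadd, hcomm⟩
    let e : (rho ψ).range ≃+ (rho ψ').range := AddSubgroup.addEquivOfBijOn h hbij hadd
    have he (r : (rho ψ).range) : (e ⟨ψ r, psi_mem_range_rho ψ r.2⟩ : G') = ψ' (e r) :=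
      hcomm r r.2
    obtain ⟨w, hwbij, hw⟩ := exists_bijective_coset_values e he hcard
    exact ⟨extendAlongCosets e w, bijective_extendAlongCosets e w hwbij,
      isQuandleHom_of_map_add_mem e (extendAlongCosets_add_of_mem e w)
        (rho_extendAlongCosets e he hw)⟩
end
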